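/- arXiv:1608.02156 — 7 statements merged into one kernel-verified Lean document; each statement's English description precedes it below -/
import Mathlib

section
/- For every a > 0, the function ϱ(a) = ∫₀^∞ sinh(2a)/(cosh(a+t) · √(sinh²(2a+2t) - sinh²(2a))) dt satisfies ϱ(a) < π/(4 cosh a). In particular ϱ(a) → 0 as a → ∞. -/
open Real MeasureTheory Filter

noncomputable def varrho (a : ℝ) : ℝ :=
  ∫ t in Set.Ioi (0:ℝ),
    Real.sinh (2*a) /
      (Real.cosh (a+t) * Real.sqrt (Real.sinh (2*(a+t))^2 - Real.sinh (2*a)^2))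

/-!
With `A = sinh 2a`, `S = sinh 2(a+t)` and `C = cosh 2(a+t)`, the integrand
`A / (cosh (a+t) * √(S² - A²))` lies strictly below `A * C / (cosh a * S * √(S² - A²))`,
since `cosh a ≤ cosh (a+t)` and `S < C`. The majorant is the derivative of
`-arcsin (A / S) / (2 cosh a)`, which rises from `-π / (4 cosh a)` at `t = 0` to `0` at infinity.
As `cosh a → ∞`, the bound also gives `ϱ(a) → 0`.
-/

open Set Topology

lemma Real.tendsto_sinh_atTop : Tendsto sinh atTop atTop :=
  tendsto_atTop_mono' _ ((eventually_ge_atTop 0).mono fun _ hx => self_le_sinh_iff.2 hx)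
    tendsto_id

lemma Real.tendsto_cosh_atTop : Tendsto cosh atTop atTop :=
  tendsto_atTop_mono (fun x => (sinh_lt_cosh x).le) tendsto_sinh_atTop

theorem setIntegral_lt_setIntegral_of_forall_lt {X : Type*} [MeasurableSpace X] {μ : Measure X}
    {s : Set X} {f g : X → ℝ} (hs : MeasurableSet s) (hμs : μ s ≠ 0)
    (hf : IntegrableOn f s μ) (hg : IntegrableOn g s μ) (hlt : ∀ x ∈ s, f x < g x) :
    ∫ x in s, f x ∂μ < ∫ x in s, g x ∂μ := by
  have hnonneg : 0 ≤ᵐ[μ.restrict s] fun x => g x - f x := by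
    filter_upwards [ae_restrict_mem hs] with x hx using sub_nonneg.2 (hlt x hx).le
  have hsupport : Function.support (fun x => g x - f x) ∩ s = s :=
    inter_eq_right.2 fun x hx => (sub_pos.2 (hlt x hx)).ne'
  have hpos : 0 < ∫ x in s, (g x - f x) ∂μ := by
    rw [setIntegral_pos_iff_support_of_nonneg_ae hnonneg (hg.sub hf), hsupport]
    exact pos_iff_ne_zero.2 hμs
  rwa [integral_sub hg hf, sub_pos] at hpos

theorem hasDerivAt_arcsin_const_div {u : ℝ → ℝ} {u' c x : ℝ} (hc : 0 < c) (hcu : c < u x)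
    (hu : HasDerivAt u u' x) :
    HasDerivAt (fun t => arcsin (c / u t)) (-(c * u') / (u x * √(u x ^ 2 - c ^ 2))) x := by
  have hux : 0 < u x := hc.trans hcu
  have hD : 0 < u x ^ 2 - c ^ 2 := by nlinarith
  have hsqrt : √(1 - (c / u x) ^ 2) = √(u x ^ 2 - c ^ 2) / u x := by
    rw [show 1 - (c / u x) ^ 2 = (u x ^ 2 - c ^ 2) / u x ^ 2 by field_simp,
      sqrt_div hD.le, sqrt_sq hux.le]
  have harcsin := hasDerivAt_arcsin (x := c / u x) (by linarith [div_pos hc hux])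
    ((div_lt_one hux).2 hcu).ne
  refine (harcsin.comp x ((hasDerivAt_const x c).div hu hux.ne')).congr_deriv ?_
  have := sqrt_pos.2 hD
  rw [hsqrt]
  field_simp
  ring

noncomputable def varrhoIntegrand (a t : ℝ) : ℝ :=
  sinh (2*a) / (cosh (a+t) * √(sinh (2*(a+t))^2 - sinh (2*a)^2))

noncomputable def varrhoMajorant (a t : ℝ) : ℝ :=
  sinh (2*a) * cosh (2*(a+t)) / (cosh a * sinh (2*(a+t)) * √(sinh (2*(a+t))^2 - sinh (2*a)^2))

noncomputable def varrhoPrimitive (a t : ℝ) : ℝ :=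
  -arcsin (sinh (2*a) / sinh (2*(a+t))) / (2 * cosh a)

lemma varrho_eq_integral_varrhoIntegrand (a : ℝ) :
    varrho a = ∫ t in Ioi 0, varrhoIntegrand a t := rfl

lemma tendsto_varrhoPrimitive_atTop (a : ℝ) : Tendsto (varrhoPrimitive a) atTop (𝓝 0) := by
  have hS : Tendsto (fun t => sinh (2*(a+t))) atTop atTop :=
    tendsto_sinh_atTop.comp
      ((tendsto_atTop_add_const_left atTop a tendsto_id).const_mul_atTop two_pos)
  have := ((continuous_arcsin.tendsto 0).comp
    (tendsto_const_nhds (x := sinh (2*a)) |>.div_atTop hS)).neg.div_const (2 * cosh a)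
  unfold varrhoPrimitive
  simpa [Function.comp_def] using this

section

variable {a : ℝ}

lemma varrhoIntegrand_nonneg (ha : 0 ≤ a) (t : ℝ) : 0 ≤ varrhoIntegrand a t := by
  have := sinh_nonneg_iff.2 (by linarith : 0 ≤ 2 * a)
  unfold varrhoIntegrand
  positivity

lemma sinh_two_mul_pos_and_lt (ha : 0 < a) {t : ℝ} (ht : 0 < t) :
    0 < sinh (2*a) ∧ sinh (2*a) < sinh (2*(a+t)) :=
  ⟨sinh_pos_iff.2 (by linarith), sinh_lt_sinh.2 (by linarith)⟩

lemma varrhoIntegrand_lt_varrhoMajorant (ha : 0 < a) {t : ℝ} (ht : 0 < t) :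
    varrhoIntegrand a t < varrhoMajorant a t := by
  obtain ⟨hA, hAS⟩ := sinh_two_mul_pos_and_lt ha ht
  have hS : 0 < sinh (2*(a+t)) := hA.trans hAS
  have hD : 0 < √(sinh (2*(a+t))^2 - sinh (2*a)^2) := sqrt_pos.2 (by nlinarith)
  have hcosh : cosh a ≤ cosh (a+t) :=
    cosh_le_cosh.2 (by rw [abs_of_pos ha, abs_of_pos (by linarith)]; linarith)
  have hkey : cosh a * sinh (2*(a+t)) < cosh (a+t) * cosh (2*(a+t)) :=
    mul_lt_mul' hcosh (sinh_lt_cosh _) hS.le (cosh_pos _)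
  unfold varrhoIntegrand varrhoMajorant
  rw [div_lt_div_iff₀ (by positivity) (by positivity)]
  nlinarith [mul_pos hA hD]

lemma hasDerivAt_varrhoPrimitive (ha : 0 < a) {t : ℝ} (ht : 0 < t) :
    HasDerivAt (varrhoPrimitive a) (varrhoMajorant a t) t := by
  obtain ⟨hA, hAS⟩ := sinh_two_mul_pos_and_lt ha ht
  have hinner : HasDerivAt (fun s => 2 * (a + s)) 2 t := by
    simpa using ((hasDerivAt_id t).const_add a).const_mul 2
  have harcsin := hasDerivAt_arcsin_const_div (u := fun s => sinh (2*(a+s))) hA hAS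
    ((hasDerivAt_sinh _).comp t hinner)
  refine (harcsin.neg.div_const (2 * cosh a)).congr_deriv ?_
  have := cosh_pos a
  unfold varrhoMajorant
  field_simp

lemma continuousAt_varrhoPrimitive_zero (ha : 0 < a) : ContinuousAt (varrhoPrimitive a) 0 := by
  have hS : sinh (2*(a+0)) ≠ 0 := (sinh_pos_iff.2 (by linarith)).ne'
  unfold varrhoPrimitive
  fun_prop (disch := assumption)

lemma varrhoPrimitive_zero (ha : 0 < a) : varrhoPrimitive a 0 = -(π / (4 * cosh a)) := by
  have hA : sinh (2*a) ≠ 0 := (sinh_pos_iff.2 (by linarith)).ne'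
  rw [varrhoPrimitive, add_zero, div_self hA, arcsin_one]
  ring

lemma varrhoMajorant_nonneg (ha : 0 < a) {t : ℝ} (ht : 0 < t) : 0 ≤ varrhoMajorant a t :=
  (varrhoIntegrand_nonneg ha.le t).trans (varrhoIntegrand_lt_varrhoMajorant ha ht).le

lemma integrableOn_varrhoMajorant (ha : 0 < a) : IntegrableOn (varrhoMajorant a) (Ioi 0) :=
  integrableOn_Ioi_deriv_of_nonneg (continuousAt_varrhoPrimitive_zero ha).continuousWithinAt
    (fun _ ht => hasDerivAt_varrhoPrimitive ha ht) (fun _ ht => varrhoMajorant_nonneg ha ht)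
    (tendsto_varrhoPrimitive_atTop a)

lemma integral_varrhoMajorant (ha : 0 < a) :
    ∫ t in Ioi 0, varrhoMajorant a t = π / (4 * cosh a) := by
  rw [integral_Ioi_of_hasDerivAt_of_nonneg
    (continuousAt_varrhoPrimitive_zero ha).continuousWithinAt
    (fun _ ht => hasDerivAt_varrhoPrimitive ha ht) (fun _ ht => varrhoMajorant_nonneg ha ht)
    (tendsto_varrhoPrimitive_atTop a), varrhoPrimitive_zero ha, zero_sub, neg_neg]

lemma integrableOn_varrhoIntegrand (ha : 0 < a) : IntegrableOn (varrhoIntegrand a) (Ioi 0) := by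
  have hmeas : Measurable (varrhoIntegrand a) := by unfold varrhoIntegrand; fun_prop
  refine (integrableOn_varrhoMajorant ha).mono' hmeas.aestronglyMeasurable ?_
  filter_upwards [ae_restrict_mem measurableSet_Ioi] with t ht
  rw [norm_of_nonneg (varrhoIntegrand_nonneg ha.le t)]
  exact (varrhoIntegrand_lt_varrhoMajorant ha ht).le

theorem varrho_lt_pi_div_four_mul_cosh (ha : 0 < a) : varrho a < π / (4 * cosh a) := by
  rw [varrho_eq_integral_varrhoIntegrand, ← integral_varrhoMajorant ha]
  exact setIntegral_lt_setIntegral_of_forall_lt measurableSet_Ioi (by simp)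
    (integrableOn_varrhoIntegrand ha) (integrableOn_varrhoMajorant ha)
    fun _ ht => varrhoIntegrand_lt_varrhoMajorant ha ht

theorem varrho_nonneg (ha : 0 ≤ a) : 0 ≤ varrho a :=
  setIntegral_nonneg measurableSet_Ioi fun t _ => varrhoIntegrand_nonneg ha t

end

theorem varrho_lt_and_tendsto_zero :
    (∀ a : ℝ, 0 < a → varrho a < π / (4 * Real.cosh a)) ∧
    Tendsto varrho atTop (nhds 0) := by
  refine ⟨fun a ha => varrho_lt_pi_div_four_mul_cosh ha, ?_⟩
  have hbound : Tendsto (fun a => π / (4 * cosh a)) atTop (𝓝 0) :=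
    tendsto_const_nhds.div_atTop (tendsto_cosh_atTop.const_mul_atTop four_pos)
  refine squeeze_zero' ?_ ?_ hbound
  · filter_upwards [eventually_ge_atTop 0] with a ha using varrho_nonneg ha
  · filter_upwards [eventually_gt_atTop 0] with a ha using (varrho_lt_pi_div_four_mul_cosh ha).le
end

section
/- For each fixed t ≥ 0, the function a ↦ sinh(2(a+t))/√(sinh²(2(a+t)) - sinh²(2a)) is monotonically increasing in a on (0,∞), and its limit as a → ∞ is 1/√(1 - e^{-4t}) for t > 0. -/
open Real Filter

private lemma sinh_mul_sinh' (u v : ℝ) :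
    Real.sinh u * Real.sinh v = (Real.cosh (u+v) - Real.cosh (u-v))/2 := by
  rw [Real.sinh_eq, Real.sinh_eq, Real.cosh_eq, Real.cosh_eq,
    show -(u+v) = -u + -v by ring, show u - v = u + -v by ring,
    show -(u + -v) = -u + v by ring, Real.exp_add, Real.exp_add, Real.exp_add, Real.exp_add]
  ring

theorem Phi_monotone_and_limit (t : ℝ) (ht : 0 ≤ t) :
    MonotoneOn (fun a : ℝ =>
      Real.sinh (2*(a+t)) / Real.sqrt (Real.sinh (2*(a+t))^2 - Real.sinh (2*a)^2))
      (Set.Ioi (0:ℝ)) ∧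
    (0 < t → Tendsto (fun a : ℝ =>
      Real.sinh (2*(a+t)) / Real.sqrt (Real.sinh (2*(a+t))^2 - Real.sinh (2*a)^2))
      atTop (nhds (1 / Real.sqrt (1 - Real.exp (-4*t))))) := by
  constructor
  · rcases eq_or_lt_of_le ht with h0 | h0
    · intro a _ b _ _
      simp [← h0]
    · -- t > 0
      intro a ha b hb hab
      simp only [Set.mem_Ioi] at ha hb
      simp only
      have hsa : 0 < Real.sinh (2*a) := Real.sinh_pos_iff.2 (by linarith)
      have hsb : 0 < Real.sinh (2*b) := Real.sinh_pos_iff.2 (by linarith)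
      have hsA : 0 < Real.sinh (2*(a+t)) := Real.sinh_pos_iff.2 (by linarith)
      have hsB : 0 < Real.sinh (2*(b+t)) := Real.sinh_pos_iff.2 (by linarith)
      have haA : Real.sinh (2*a) < Real.sinh (2*(a+t)) := Real.sinh_lt_sinh.2 (by linarith)
      have hbB : Real.sinh (2*b) < Real.sinh (2*(b+t)) := Real.sinh_lt_sinh.2 (by linarith)
      have hA2 : 0 < Real.sinh (2*(a+t))^2 - Real.sinh (2*a)^2 := by nlinarith
      have hB2 : 0 < Real.sinh (2*(b+t))^2 - Real.sinh (2*b)^2 := by nlinarith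
      -- key inequality
      have e1 := sinh_mul_sinh' (2*b) (2*(a+t))
      have e2 := sinh_mul_sinh' (2*a) (2*(b+t))
      have habs : |2*b - 2*(a+t)| ≤ |2*a - 2*(b+t)| := by
        rw [abs_of_nonpos (show 2*a - 2*(b+t) ≤ 0 by linarith), abs_le]
        constructor <;> linarith
      have hc : Real.cosh (2*b - 2*(a+t)) ≤ Real.cosh (2*a - 2*(b+t)) :=
        Real.cosh_le_cosh.2 habs
      have hsum : (2*b : ℝ) + 2*(a+t) = 2*a + 2*(b+t) := by ring
      rw [hsum] at e1
      have key : Real.sinh (2*a) * Real.sinh (2*(b+t)) ≤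
          Real.sinh (2*b) * Real.sinh (2*(a+t)) := by linarith
      rw [div_le_div_iff₀ (Real.sqrt_pos.2 hA2) (Real.sqrt_pos.2 hB2)]
      have lhs_eq : Real.sinh (2*(a+t)) * Real.sqrt (Real.sinh (2*(b+t))^2 - Real.sinh (2*b)^2)
          = Real.sqrt (Real.sinh (2*(a+t))^2 * (Real.sinh (2*(b+t))^2 - Real.sinh (2*b)^2)) := by
        rw [Real.sqrt_mul (sq_nonneg _), Real.sqrt_sq hsA.le]
      have rhs_eq : Real.sinh (2*(b+t)) * Real.sqrt (Real.sinh (2*(a+t))^2 - Real.sinh (2*a)^2)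
          = Real.sqrt (Real.sinh (2*(b+t))^2 * (Real.sinh (2*(a+t))^2 - Real.sinh (2*a)^2)) := by
        rw [Real.sqrt_mul (sq_nonneg _), Real.sqrt_sq hsB.le]
      rw [lhs_eq, rhs_eq]
      apply Real.sqrt_le_sqrt
      nlinarith [mul_self_le_mul_self
        (by positivity : (0:ℝ) ≤ Real.sinh (2*a) * Real.sinh (2*(b+t))) key]
  · intro htpos
    have h4 : Tendsto (fun a : ℝ => 4*a) atTop atTop :=
      tendsto_id.const_mul_atTop (by norm_num)
    have h1 : Tendsto (fun a : ℝ => Real.exp (-(4*a))) atTop (nhds 0) :=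
      Real.tendsto_exp_atBot.comp (tendsto_neg_atTop_atBot.comp h4)
    have hnum : Tendsto (fun a : ℝ => 1 - Real.exp (-(4*a))) atTop (nhds 1) := by
      simpa using tendsto_const_nhds.sub h1
    have hden : Tendsto (fun a : ℝ => Real.exp (2*t) - Real.exp (-(4*a)) * Real.exp (-(2*t)))
        atTop (nhds (Real.exp (2*t))) := by
      simpa using (tendsto_const_nhds (x := Real.exp (2*t))).sub (h1.mul tendsto_const_nhds)
    have hg : Tendsto (fun a : ℝ => Real.sinh (2*a) / Real.sinh (2*(a+t))) atTop
        (nhds (Real.exp (-(2*t)))) := by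
      have hratio := hnum.div hden (Real.exp_ne_zero _)
      have hlim : (1:ℝ) / Real.exp (2*t) = Real.exp (-(2*t)) := by
        rw [Real.exp_neg, one_div]
      rw [hlim] at hratio
      apply hratio.congr'
      filter_upwards [eventually_gt_atTop 0] with a ha
      simp only [Pi.div_apply]
      have hS : (0:ℝ) < Real.sinh (2*(a+t)) := Real.sinh_pos_iff.2 (by linarith)
      have hd : (0:ℝ) < Real.exp (2*t) - Real.exp (-(4*a)) * Real.exp (-(2*t)) := by
        rw [← Real.exp_add]
        exact sub_pos.2 (Real.exp_lt_exp.2 (by linarith))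
      rw [div_eq_div_iff hd.ne' hS.ne']
      have ea := Real.exp_ne_zero (2*a)
      have et := Real.exp_ne_zero (2*t)
      rw [Real.sinh_eq, Real.sinh_eq,
        show (2*(a+t):ℝ) = 2*a + 2*t by ring,
        show (-(2*a + 2*t):ℝ) = -(2*a) + -(2*t) by ring,
        show (-(4*a):ℝ) = -(2*a) + -(2*a) by ring,
        Real.exp_add, Real.exp_add, Real.exp_neg, Real.exp_neg]
      simp only [Real.exp_add, Real.exp_neg]
      field_simp
    have hsq2 : Real.exp (-(2*t)) ^ 2 = Real.exp (-4*t) := by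
      rw [sq, ← Real.exp_add]; congr 1; ring
    have hg2 : Tendsto (fun a : ℝ => 1 - (Real.sinh (2*a) / Real.sinh (2*(a+t)))^2) atTop
        (nhds (1 - Real.exp (-4*t))) := by
      rw [← hsq2]
      exact tendsto_const_nhds.sub (hg.pow 2)
    have hpos : 0 < Real.sqrt (1 - Real.exp (-4*t)) :=
      Real.sqrt_pos.2 (sub_pos.2 (Real.exp_lt_one_iff.2 (by linarith)))
    have hfinal := (tendsto_const_nhds (x := (1:ℝ))).div hg2.sqrt hpos.ne'
    apply hfinal.congr'
    filter_upwards [eventually_gt_atTop 0] with a ha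
    have hsa : 0 < Real.sinh (2*a) := Real.sinh_pos_iff.2 (by linarith)
    have hS : 0 < Real.sinh (2*(a+t)) := Real.sinh_pos_iff.2 (by linarith)
    try simp only [Pi.div_apply]
    have keyid : Real.sinh (2*(a+t))^2 - Real.sinh (2*a)^2
        = Real.sinh (2*(a+t))^2 * (1 - (Real.sinh (2*a) / Real.sinh (2*(a+t)))^2) := by
      field_simp
    rw [keyid, Real.sqrt_mul (sq_nonneg _), Real.sqrt_sq hS.le, div_mul_eq_div_div,
      div_self hS.ne']
end

section
/- The constant K = ∫₀¹ (1/x²)·(1/√(1-x⁴) - 1) dx satisfies 0 < K < 1. -/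
/-!
Rationalising, `(1/x²)(1/√(1-x⁴) - 1) = x² / (√(1-x⁴)(1 + √(1-x⁴)))`, which is positive on `(0,1)`
and, since `√(1-x²) ≤ √(1-x⁴)`, strictly below `x / √(1-x²)`. The latter is the derivative of
`-√(1-x²)`, so its integral over `(0,1)` is exactly `1`.
-/

open Real MeasureTheory Set

noncomputable def integrandK (x : ℝ) : ℝ := 1 / x ^ 2 * (1 / √(1 - x ^ 4) - 1)

lemma integrandK_eq {x : ℝ} (hx : x ≠ 0) (hx4 : x ^ 4 < 1) :
    integrandK x = x ^ 2 / (√(1 - x ^ 4) * (1 + √(1 - x ^ 4))) := by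
  have hs : 0 < √(1 - x ^ 4) := sqrt_pos.mpr (by linarith)
  have hs_sq : √(1 - x ^ 4) ^ 2 = 1 - x ^ 4 := sq_sqrt (by linarith)
  rw [integrandK]
  field_simp
  linear_combination (-1) * hs_sq

lemma integrandK_pos {x : ℝ} (hx : x ∈ Ioo (0 : ℝ) 1) : 0 < integrandK x := by
  obtain ⟨hx0, hx1⟩ := hx
  have hx4 : x ^ 4 < 1 := pow_lt_one₀ hx0.le hx1 (by norm_num)
  have hs : 0 < √(1 - x ^ 4) := sqrt_pos.mpr (by linarith)
  rw [integrandK_eq hx0.ne' hx4]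
  positivity

lemma integrandK_lt {x : ℝ} (hx : x ∈ Ioo (0 : ℝ) 1) : integrandK x < x / √(1 - x ^ 2) := by
  obtain ⟨hx0, hx1⟩ := hx
  have hx4 : x ^ 4 < 1 := pow_lt_one₀ hx0.le hx1 (by norm_num)
  have hs : 0 < √(1 - x ^ 4) := sqrt_pos.mpr (by linarith)
  have ht : 0 < √(1 - x ^ 2) := sqrt_pos.mpr (by nlinarith)
  have hts : √(1 - x ^ 2) ≤ √(1 - x ^ 4) := sqrt_le_sqrt (by nlinarith)
  rw [integrandK_eq hx0.ne' hx4, div_lt_div_iff₀ (by positivity) ht]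
  have key : x * √(1 - x ^ 2) < √(1 - x ^ 4) * (1 + √(1 - x ^ 4)) := by nlinarith
  nlinarith [mul_lt_mul_of_pos_left key hx0]

lemma hasDerivAt_neg_sqrt_one_sub_sq {x : ℝ} (hx : x ∈ Ioo (-1 : ℝ) 1) :
    HasDerivAt (fun y : ℝ => -√(1 - y ^ 2)) (x / √(1 - x ^ 2)) x := by
  have hx' : 1 - x ^ 2 ≠ 0 := by nlinarith [hx.1, hx.2]
  refine (((hasDerivAt_pow 2 x).const_sub 1).sqrt hx').fun_neg.congr_deriv ?_
  push_cast
  ring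

lemma continuous_neg_sqrt_one_sub_sq : Continuous fun y : ℝ => -√(1 - y ^ 2) := by
  fun_prop

lemma integrableOn_div_sqrt_one_sub_sq :
    IntegrableOn (fun x : ℝ => x / √(1 - x ^ 2)) (Ioc 0 1) :=
  intervalIntegral.integrableOn_deriv_of_nonneg continuous_neg_sqrt_one_sub_sq.continuousOn
    (fun _ hx => hasDerivAt_neg_sqrt_one_sub_sq (Ioo_subset_Ioo_left (by norm_num) hx))
    (fun _ hx => div_nonneg hx.1.le (sqrt_nonneg _))

lemma integral_div_sqrt_one_sub_sq : ∫ x in (0 : ℝ)..1, x / √(1 - x ^ 2) = 1 := by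
  rw [intervalIntegral.integral_eq_sub_of_hasDerivAt_of_le zero_le_one
    continuous_neg_sqrt_one_sub_sq.continuousOn
    (fun _ hx => hasDerivAt_neg_sqrt_one_sub_sq (Ioo_subset_Ioo_left (by norm_num) hx))
    ((intervalIntegrable_iff_integrableOn_Ioc_of_le zero_le_one).mpr
      integrableOn_div_sqrt_one_sub_sq)]
  norm_num

lemma integrableOn_integrandK : IntegrableOn integrandK (Ioo 0 1) := by
  refine (integrableOn_div_sqrt_one_sub_sq.mono_set Ioo_subset_Ioc_self).mono' ?_ ?_
  · exact (by unfold integrandK; fun_prop : Measurable integrandK).aestronglyMeasurable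
  · refine (ae_restrict_iff' measurableSet_Ioo).mpr (.of_forall fun x hx => ?_)
    rw [norm_of_nonneg (integrandK_pos hx).le]
    exact (integrandK_lt hx).le

lemma intervalIntegral.integral_lt_integral_of_forall_mem_Ioo_lt {f g : ℝ → ℝ} {a b : ℝ}
    (hab : a < b) (hf : IntervalIntegrable f volume a b) (hg : IntervalIntegrable g volume a b)
    (hlt : ∀ x ∈ Ioo a b, f x < g x) : ∫ x in a..b, f x < ∫ x in a..b, g x := by
  have hgap := intervalIntegral.intervalIntegral_pos_of_pos_on (hg.sub hf)
    (fun x hx => sub_pos.mpr (hlt x hx)) hab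
  rw [intervalIntegral.integral_sub hg hf] at hgap
  linarith

theorem K_pos_lt_one :
    0 < ∫ x in Set.Ioo (0:ℝ) 1, (1/x^2) * (1 / Real.sqrt (1 - x^4) - 1) ∧
    (∫ x in Set.Ioo (0:ℝ) 1, (1/x^2) * (1 / Real.sqrt (1 - x^4) - 1)) < 1 := by
  change 0 < ∫ x in Ioo 0 1, integrandK x ∧ ∫ x in Ioo 0 1, integrandK x < 1
  have hK : IntervalIntegrable integrandK volume 0 1 :=
    (intervalIntegrable_iff_integrableOn_Ioo_of_le zero_le_one).mpr integrableOn_integrandK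
  have hg : IntervalIntegrable (fun x : ℝ => x / √(1 - x ^ 2)) volume 0 1 :=
    (intervalIntegrable_iff_integrableOn_Ioc_of_le zero_le_one).mpr
      integrableOn_div_sqrt_one_sub_sq
  rw [← integral_Ioc_eq_integral_Ioo, ← intervalIntegral.integral_of_le zero_le_one]
  refine ⟨intervalIntegral.intervalIntegral_pos_of_pos_on hK (fun _ hx => integrandK_pos hx)
    one_pos, ?_⟩
  calc ∫ x in (0 : ℝ)..1, integrandK x
      < ∫ x in (0 : ℝ)..1, x / √(1 - x ^ 2) :=
        intervalIntegral.integral_lt_integral_of_forall_mem_Ioo_lt one_pos hK hg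
          fun _ hx => integrandK_lt hx
    _ = 1 := integral_div_sqrt_one_sub_sq
end

section
/- For a ≥ arcosh(√(3+√5)/2) and t ≥ 0, one has √5·cosh(a+t) ≤ cosh(3a+t). -/
/-!
Since `cosh (3a) = cosh a · (4 cosh² a - 3)` and `sinh (3a) = sinh a · (4 cosh² a - 1)`, the
bound `4 cosh² a - 3 ≥ √5`, which is the hypothesis on `a` read through the monotonicity of
`cosh` on `[0, ∞)`, gives `√5 cosh a ≤ cosh (3a)`
and `√5 sinh a ≤ sinh (3a)`. Expanding `cosh (a + t)` and `cosh (3a + t)` with the addition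
formula, the two bounds combine since `cosh t, sinh t ≥ 0`.
-/

open Real

noncomputable def arcosh (x : ℝ) : ℝ := Real.log (x + Real.sqrt (x^2 - 1))

theorem arcosh_eq_real_arcosh (x : ℝ) : _root_.arcosh x = Real.arcosh x := rfl

theorem le_cosh_of_arcosh_le {x a : ℝ} (hx : 1 ≤ x) (h : Real.arcosh x ≤ a) : x ≤ cosh a := by
  have h0 : 0 ≤ Real.arcosh x := arcosh_nonneg hx
  calc x = cosh (Real.arcosh x) := (cosh_arcosh hx).symm
    _ ≤ cosh a := cosh_le_cosh.2 (by rwa [abs_of_nonneg h0, abs_of_nonneg (h0.trans h)])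

theorem mul_cosh_le_cosh_three_mul {c a : ℝ} (hc : c ≤ 4 * cosh a ^ 2 - 3) :
    c * cosh a ≤ cosh (3 * a) :=
  calc c * cosh a ≤ (4 * cosh a ^ 2 - 3) * cosh a := by gcongr
    _ = cosh (3 * a) := by rw [cosh_three_mul]; ring

theorem mul_sinh_le_sinh_three_mul {c a : ℝ} (ha : 0 ≤ a) (hc : c ≤ 4 * cosh a ^ 2 - 3) :
    c * sinh a ≤ sinh (3 * a) :=
  calc c * sinh a ≤ (4 * cosh a ^ 2 - 1) * sinh a := by
        have : 0 ≤ sinh a := sinh_nonneg_iff.2 ha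
        gcongr
        linarith
    _ = sinh (3 * a) := by rw [sinh_three_mul, cosh_sq]; ring

theorem mul_cosh_add_le_cosh_add {c a b t : ℝ} (hcosh : c * cosh a ≤ cosh b)
    (hsinh : c * sinh a ≤ sinh b) (ht : 0 ≤ t) : c * cosh (a + t) ≤ cosh (b + t) :=
  calc c * cosh (a + t) = c * cosh a * cosh t + c * sinh a * sinh t := by rw [cosh_add]; ring
    _ ≤ cosh b * cosh t + sinh b * sinh t := by
        have : 0 ≤ sinh t := sinh_nonneg_iff.2 ht
        gcongr
    _ = cosh (b + t) := (cosh_add b t).symm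

theorem sqrt_five_cosh_le (a t : ℝ)
    (ha : _root_.arcosh (Real.sqrt (3 + Real.sqrt 5) / 2) ≤ a) (ht : 0 ≤ t) :
    Real.sqrt 5 * Real.cosh (a+t) ≤ Real.cosh (3*a+t) := by
  set x := √(3 + √5) / 2
  have hx_sq : 4 * x ^ 2 - 3 = √5 := by
    rw [div_pow, sq_sqrt (by positivity)]
    ring
  have hx_nonneg : 0 ≤ x := by positivity
  have hx_one : 1 ≤ x := by nlinarith [one_le_sqrt.2 (by norm_num : (1 : ℝ) ≤ 5)]
  rw [arcosh_eq_real_arcosh] at ha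
  have ha_nonneg : 0 ≤ a := (arcosh_nonneg hx_one).trans ha
  have hkey : √5 ≤ 4 * cosh a ^ 2 - 3 := by
    rw [← hx_sq]
    gcongr
    exact le_cosh_of_arcosh_le hx_one ha
  exact mul_cosh_add_le_cosh_add (mul_cosh_le_cosh_three_mul hkey)
    (mul_sinh_le_sinh_three_mul ha_nonneg hkey) ht
end

section
/- Let ψ(a,t) = 76 sinh(2a) − 22 sinh(2t) + 29 sinh(4a+2t) + sinh(8a+2t) − 26 sinh(6a+4t) − 6 sinh(10a+4t) − 25 sinh(8a+6t) + sinh(12a+6t). Then ψ(a,t) < 0 for all 0 < a ≤ A₄ and t > 0, where A₄ = (1/4)·arcosh((35+√1241)/8). -/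
/-!
Put `u = e^{4a}` and `w = e^{2a+2t}`. Then `2 e^{12a+6t} ψ(a,t) = P(u, w)` for the polynomial
`P = psiPoly`, and `a, t > 0` give `1 < u < w²`. On the region `1 ≤ u ≤ 25`, `1 < w`, `u ≤ w²`
the polynomial `P` is negative: adding to it the nonnegative multiples `(25 - u) u² w⁴ (w² - 1)`
and `64 u w² (w² - u)` of the constraints (the first one cancels the `w⁶` terms, whose coefficient
`u² (u - 25)` makes 25 the sharp bound) leaves a polynomial whose coefficients in `u - 1` and
`w - 1` are all negative. Finally `e^{4A₄} < 2 cosh (4A₄) < 25`.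
-/

open Real

theorem exp_arcosh_le_two_mul {x : ℝ} (hx : 0 < x) : exp (_root_.arcosh x) ≤ 2 * x := by
  have hsqrt : √(x ^ 2 - 1) ≤ x := Real.sqrt_le_left hx.le |>.2 (by linarith)
  rw [_root_.arcosh, exp_log (by positivity)]
  linarith

noncomputable def psi (a t : ℝ) : ℝ :=
  76 * Real.sinh (2*a) - 22 * Real.sinh (2*t) + 29 * Real.sinh (4*a+2*t)
    + Real.sinh (8*a+2*t) - 26 * Real.sinh (6*a+4*t) - 6 * Real.sinh (10*a+4*t)
    - 25 * Real.sinh (8*a+6*t) + Real.sinh (12*a+6*t)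

def psiPoly (u w : ℝ) : ℝ :=
  u^3*w^6 - 25*u^2*w^6 - 6*u^3*w^5 - 26*u^2*w^5 + u^3*w^4 + 29*u^2*w^4 - 22*u*w^4
    + 76*u^2*w^3 - 76*u*w^3 + 22*u^2*w^2 - 29*u*w^2 - w^2 + 26*u*w + 6*w + 25*u - 1

def psiRemainder (p r : ℝ) : ℝ :=
  4*p^3 + (80 + 98*p + 36*p^2 + 22*p^3) * r + (104 + 249*p + 194*p^2 + 48*p^3) * r^2
    + (128 + 400*p + 324*p^2 + 52*p^3) * r^3 + (112 + 294*p + 210*p^2 + 28*p^3) * r^4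
    + (32 + 70*p + 44*p^2 + 6*p^3) * r^5

theorem psiRemainder_pos {p r : ℝ} (hp : 0 ≤ p) (hr : 0 < r) : 0 < psiRemainder p r := by
  unfold psiRemainder
  positivity

theorem psiPoly_eq (u w : ℝ) :
    psiPoly u w = -((25 - u) * u^2 * w^4 * (w^2 - 1)) - 64 * u * w^2 * (w^2 - u)
      - psiRemainder (u - 1) (w - 1) := by
  unfold psiPoly psiRemainder
  ring

theorem psiPoly_neg {u w : ℝ} (hu : 1 ≤ u) (hu25 : u ≤ 25) (hw : 1 < w) (huw : u ≤ w^2) :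
    psiPoly u w < 0 := by
  have h25 : 0 ≤ (25 - u) * u^2 * w^4 * (w^2 - 1) := by
    have : 0 ≤ 25 - u := by linarith
    have : 0 ≤ w^2 - 1 := sub_nonneg.2 (one_le_pow₀ hw.le)
    positivity
  have hsq : 0 ≤ 64 * u * w^2 * (w^2 - u) := by
    have : 0 ≤ w^2 - u := by linarith
    have : 0 ≤ u := by linarith
    positivity
  have hrem := psiRemainder_pos (sub_nonneg.2 hu) (sub_pos.2 hw)
  rw [psiPoly_eq]
  linarith

theorem psi_eq_psiPoly_div (a t : ℝ) :
    psi a t = psiPoly (exp (2*a) ^ 2) (exp (2*a) * exp (2*t))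
      / (2 * exp (2*a) ^ 6 * exp (2*t) ^ 3) := by
  have e : ∀ m n : ℕ, exp (2 * m * a + 2 * n * t) = exp (2*a) ^ m * exp (2*t) ^ n := by
    intro m n
    rw [exp_add, ← exp_nat_mul, ← exp_nat_mul]
    ring_nf
  have e21 := e 2 1
  have e41 := e 4 1
  have e32 := e 3 2
  have e52 := e 5 2
  have e43 := e 4 3
  have e63 := e 6 3
  norm_num at e21 e41 e32 e52 e43 e63
  unfold psi psiPoly
  simp only [sinh_eq, exp_neg, e21, e41, e32, e52, e43, e63]
  field_simp
  ring

theorem psi_neg_of_exp_le {a t : ℝ} (ha : 0 ≤ a) (ht : 0 < t) (h25 : exp (4*a) ≤ 25) :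
    psi a t < 0 := by
  have hx : 1 ≤ exp (2*a) := one_le_exp (by linarith)
  have hy : 1 < exp (2*t) := one_lt_exp_iff.2 (by linarith)
  have hx2 : exp (2*a) ^ 2 = exp (4*a) := by rw [← exp_nat_mul]; ring_nf
  rw [psi_eq_psiPoly_div]
  refine div_neg_of_neg_of_pos (psiPoly_neg (one_le_pow₀ hx) (hx2 ▸ h25)
    (one_lt_mul_of_le_of_lt hx hy) ?_) (by positivity)
  gcongr
  exact le_mul_of_one_le_right (by positivity) hy.le

theorem psi_neg (a t : ℝ) (ha : 0 < a)
    (ha' : a ≤ (1/4) * _root_.arcosh ((35 + Real.sqrt 1241) / 8)) (ht : 0 < t) :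
    76 * Real.sinh (2*a) - 22 * Real.sinh (2*t) + 29 * Real.sinh (4*a+2*t)
      + Real.sinh (8*a+2*t) - 26 * Real.sinh (6*a+4*t) - 6 * Real.sinh (10*a+4*t)
      - 25 * Real.sinh (8*a+6*t) + Real.sinh (12*a+6*t) < 0 := by
  have hsqrt : √1241 ≤ 36 := Real.sqrt_le_left (by norm_num) |>.2 (by norm_num)
  refine psi_neg_of_exp_le ha.le ht ?_
  calc exp (4*a) ≤ exp (_root_.arcosh ((35 + √1241) / 8)) := exp_le_exp.2 (by linarith)
    _ ≤ 2 * ((35 + √1241) / 8) := exp_arcosh_le_two_mul (by positivity)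
    _ ≤ 25 := by linarith
end

section
/- lim_{a→0⁺} ∫₀^∞ sinh(a+t)·(5cosh²(a+t) − cosh²(3a+t)) / (cosh²(a+t)·√(sinh(2t)·sinh³(4a+2t))) dt = ∫₀^∞ dt/(sinh(t)·cosh²(t)) = +∞. -/
open Real MeasureTheory Filter Set Topology

/-!
For small `a > 0` the integrand is nonnegative and, since `sinh (2t) ≥ t eᵗ`, bounded by
`5 (sinh (4a) · t eᵗ)^(-1/2)`, so it is integrable on `(0, ∞)`. On `a < t ≤ 1` it is at least
`c / t` with `c` independent of `a`, so its integral is at least `-c log a → ∞`. In the same way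
`1 / (sinh t cosh² t) ≥ c' / t` on `(0, 1)`, and `1 / t` is not integrable at `0`.
-/

lemma integral_Ioo_div_self {a b : ℝ} (ha : 0 < a) (hab : a ≤ b) (c : ℝ) :
    ∫ t in Ioo a b, c / t = c * log (b / a) := by
  rw [← integral_Ioc_eq_integral_Ioo, ← intervalIntegral.integral_of_le hab]
  simp_rw [div_eq_mul_inv c]
  rw [intervalIntegral.integral_const_mul,
    integral_inv (by rw [uIcc_of_le hab]; exact fun h => ha.not_ge h.1)]

lemma neg_mul_log_le_setIntegral_Ioi {f : ℝ → ℝ} {a c : ℝ} (ha : 0 < a) (ha1 : a ≤ 1)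
    (hf : IntegrableOn f (Ioi 0)) (hf_nonneg : ∀ t ∈ Ioi 0, 0 ≤ f t)
    (hcf : ∀ t ∈ Ioo a 1, c / t ≤ f t) :
    -c * log a ≤ ∫ t in Ioi 0, f t := by
  have hsub : Ioo a 1 ⊆ Ioi 0 := fun t ht => ha.trans ht.1
  have hinv : IntegrableOn (fun t => c / t) (Ioo a 1) :=
    (continuousOn_const.div continuousOn_id fun t ht => (ha.trans_le ht.1).ne').integrableOn_compact
      isCompact_Icc |>.mono_set Ioo_subset_Icc_self
  calc -c * log a = ∫ t in Ioo a 1, c / t := by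
        rw [integral_Ioo_div_self ha ha1, one_div, log_inv, mul_neg, neg_mul]
    _ ≤ ∫ t in Ioo a 1, f t := setIntegral_mono_on hinv (hf.mono_set hsub) measurableSet_Ioo hcf
    _ ≤ ∫ t in Ioi 0, f t :=
        setIntegral_mono_set hf (ae_restrict_of_forall_mem measurableSet_Ioi hf_nonneg)
          hsub.eventuallyLE

lemma tendsto_setIntegral_Ioi_atTop_of_div_le {f : ℝ → ℝ → ℝ} {c : ℝ} (hc : 0 < c)
    (hf : ∀ᶠ a in 𝓝[>] 0, IntegrableOn (f a) (Ioi 0) ∧ (∀ t ∈ Ioi 0, 0 ≤ f a t) ∧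
      ∀ t ∈ Ioo a 1, c / t ≤ f a t) :
    Tendsto (fun a => ∫ t in Ioi 0, f a t) (𝓝[>] 0) atTop := by
  refine tendsto_atTop_mono' _ ?_
    (tendsto_log_nhdsGT_zero.const_mul_atBot_of_neg (neg_neg_of_pos hc))
  filter_upwards [hf, Ioo_mem_nhdsGT one_pos] with a ⟨hfi, hf_nonneg, hcf⟩ ⟨ha, ha1⟩
  exact neg_mul_log_le_setIntegral_Ioi ha ha1.le hfi hf_nonneg hcf

lemma lintegral_Ioo_ofReal_div_self_eq_top {c : ℝ} (hc : 0 < c) :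
    ∫⁻ t in Ioo 0 1, ENNReal.ofReal (c / t) = ⊤ := by
  by_contra hfin
  have hmeas : AEStronglyMeasurable (fun t : ℝ => c / t) (volume.restrict (Ioo 0 1)) :=
    (measurable_const.div measurable_id).aestronglyMeasurable
  have hpos : 0 ≤ᵐ[volume.restrict (Ioo 0 1)] fun t : ℝ => c / t :=
    ae_restrict_of_forall_mem measurableSet_Ioo fun t ht => div_nonneg hc.le ht.1.le
  have hint : IntegrableOn (fun t : ℝ => t ^ (-1 : ℝ)) (Ioo 0 1) := by
    have hcinv : IntegrableOn (fun t : ℝ => c⁻¹ * (c / t)) (Ioo 0 1) :=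
      ((lintegral_ofReal_ne_top_iff_integrable hmeas hpos).1 hfin).const_mul c⁻¹
    refine hcinv.congr_fun (fun t _ => ?_) measurableSet_Ioo
    rw [rpow_neg_one]
    field_simp
  exact lt_irrefl _ ((intervalIntegral.integrableOn_Ioo_rpow_iff one_pos).1 hint)

lemma lintegral_Ioi_ofReal_eq_top_of_div_le {g : ℝ → ℝ} {c : ℝ} (hc : 0 < c)
    (hcg : ∀ t ∈ Ioo 0 1, c / t ≤ g t) :
    ∫⁻ t in Ioi 0, ENNReal.ofReal (g t) = ⊤ := by
  refine top_le_iff.1 ?_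
  calc ⊤ = ∫⁻ t in Ioo 0 1, ENNReal.ofReal (c / t) :=
        (lintegral_Ioo_ofReal_div_self_eq_top hc).symm
    _ ≤ ∫⁻ t in Ioo 0 1, ENNReal.ofReal (g t) :=
        lintegral_mono_ae <| ae_restrict_of_forall_mem measurableSet_Ioo fun t ht =>
          ENNReal.ofReal_le_ofReal (hcg t ht)
    _ ≤ ∫⁻ t in Ioi 0, ENNReal.ofReal (g t) := lintegral_mono_set Ioo_subset_Ioi_self

lemma sinh_le_mul_exp (x : ℝ) : sinh x ≤ x * exp x := by
  have h := mul_le_mul_of_nonneg_right (add_one_le_exp (-(2 * x))) (exp_pos x).le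
  rw [← exp_add, show -(2 * x) + x = -x by ring] at h
  rw [sinh_eq]
  linarith

lemma mul_exp_le_sinh_two_mul {t : ℝ} (ht : 0 ≤ t) : t * exp t ≤ sinh (2 * t) := by
  have hcosh : exp t ≤ 2 * cosh t := by
    rw [cosh_eq]; linarith [exp_pos (-t)]
  rw [sinh_two_mul]
  nlinarith [self_le_sinh_iff.2 ht, exp_pos t]

lemma cosh_add_le_mul_exp (x : ℝ) {y : ℝ} (hy : 0 ≤ y) : cosh (x + y) ≤ cosh x * exp y := by
  rw [cosh_add, ← cosh_add_sinh y]
  nlinarith [sinh_lt_cosh x, sinh_nonneg_iff.2 hy, cosh_pos x]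

lemma integrableOn_inv_sqrt_mul_exp : IntegrableOn (fun t => (√(t * exp t))⁻¹) (Ioi 0) := by
  refine (integrableOn_rpow_mul_exp_neg_mul_rpow (s := -(1 / 2)) (p := 1) (b := 1 / 2)
    (by norm_num) one_pos one_half_pos).congr_fun (fun t ht => ?_) measurableSet_Ioi
  simp only [rpow_one]
  rw [rpow_neg (le_of_lt ht), ← sqrt_eq_rpow, sqrt_mul (le_of_lt ht), ← exp_half,
    mul_inv, ← exp_neg]
  ring_nf

noncomputable def varrhoDerivIntegrand (a t : ℝ) : ℝ :=
  sinh (a + t) * (5 * cosh (a + t) ^ 2 - cosh (3 * a + t) ^ 2) /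
    (cosh (a + t) ^ 2 * √(sinh (2 * t) * sinh (4 * a + 2 * t) ^ 3))

section varrhoDerivIntegrand

variable {a t : ℝ}

lemma varrhoDerivIntegrand_le_five_mul_sinh_div (hat : 0 ≤ a + t) :
    varrhoDerivIntegrand a t ≤
      5 * sinh (a + t) / √(sinh (2 * t) * sinh (4 * a + 2 * t) ^ 3) := by
  have hc : cosh (a + t) ^ 2 ≠ 0 := (pow_pos (cosh_pos _) 2).ne'
  rw [varrhoDerivIntegrand, ← mul_div_mul_left (5 * sinh (a + t)) _ hc]
  refine div_le_div_of_nonneg_right ?_ (by positivity)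
  nlinarith [sinh_nonneg_iff.2 hat, sq_nonneg (cosh (3 * a + t)), sq_nonneg (cosh (a + t))]

lemma sinh_div_le_varrhoDerivIntegrand (ha : 0 ≤ a) (h2a : exp (2 * a) ≤ 2)
    (hat : 0 ≤ a + t) :
    sinh (a + t) / √(sinh (2 * t) * sinh (4 * a + 2 * t) ^ 3) ≤ varrhoDerivIntegrand a t := by
  have hc : cosh (a + t) ^ 2 ≠ 0 := (pow_pos (cosh_pos _) 2).ne'
  have hcosh : cosh (3 * a + t) ≤ 2 * cosh (a + t) := by
    calc cosh (3 * a + t) = cosh ((a + t) + 2 * a) := by ring_nf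
      _ ≤ cosh (a + t) * exp (2 * a) := cosh_add_le_mul_exp _ (by linarith)
      _ ≤ 2 * cosh (a + t) := by nlinarith [cosh_pos (a + t)]
  have hsq := pow_le_pow_left₀ (cosh_pos _).le hcosh 2
  rw [varrhoDerivIntegrand, ← mul_div_mul_left (sinh (a + t)) _ hc]
  refine div_le_div_of_nonneg_right ?_ (by positivity)
  nlinarith [mul_le_mul_of_nonneg_left hsq (sinh_nonneg_iff.2 hat)]

lemma varrhoDerivIntegrand_nonneg (ha : 0 ≤ a) (h2a : exp (2 * a) ≤ 2) (hat : 0 ≤ a + t) :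
    0 ≤ varrhoDerivIntegrand a t :=
  (div_nonneg (sinh_nonneg_iff.2 hat) (sqrt_nonneg _)).trans
    (sinh_div_le_varrhoDerivIntegrand ha h2a hat)

lemma varrhoDerivIntegrand_le_inv_sqrt (ha : 0 < a) (ht : 0 < t) :
    varrhoDerivIntegrand a t ≤ 5 / √(sinh (4 * a)) * (√(t * exp t))⁻¹ := by
  have hs : 0 < sinh (a + t) := sinh_pos_iff.2 (by linarith)
  have hs_le : sinh (a + t) ≤ sinh (4 * a + 2 * t) := sinh_le_sinh.2 (by linarith)
  have h4a : 0 < sinh (4 * a) := sinh_pos_iff.2 (by linarith)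
  have h4a_le : sinh (4 * a) ≤ sinh (4 * a + 2 * t) := sinh_le_sinh.2 (by linarith)
  have hexp_le := mul_exp_le_sinh_two_mul ht.le
  have hB : 0 < t * exp t := by positivity
  have hP : 0 < sinh (2 * t) * sinh (4 * a + 2 * t) ^ 3 := by
    have := hB.trans_le hexp_le
    have := hs.trans_le hs_le
    positivity
  have key : sinh (a + t) ^ 2 * (sinh (4 * a) * (t * exp t)) ≤
      sinh (2 * t) * sinh (4 * a + 2 * t) ^ 3 := by
    calc sinh (a + t) ^ 2 * (sinh (4 * a) * (t * exp t))
        ≤ sinh (4 * a + 2 * t) ^ 2 * (sinh (4 * a + 2 * t) * sinh (2 * t)) := by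
          gcongr
      _ = sinh (2 * t) * sinh (4 * a + 2 * t) ^ 3 := by ring
  calc varrhoDerivIntegrand a t
      ≤ 5 * sinh (a + t) / √(sinh (2 * t) * sinh (4 * a + 2 * t) ^ 3) :=
        varrhoDerivIntegrand_le_five_mul_sinh_div (by linarith)
    _ ≤ 5 / √(sinh (4 * a) * (t * exp t)) := by
        rw [div_le_div_iff₀ (sqrt_pos.2 hP) (sqrt_pos.2 (by positivity)), mul_assoc,
          ← sqrt_sq hs.le, ← sqrt_mul (sq_nonneg _)]
        gcongr
    _ = 5 / √(sinh (4 * a)) * (√(t * exp t))⁻¹ := by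
        rw [sqrt_mul h4a.le, div_mul_eq_div_div, div_eq_mul_inv (5 / _)]

lemma div_le_varrhoDerivIntegrand (ha : 0 < a) (h2a : exp (2 * a) ≤ 2) (hat : a < t)
    (ht1 : t ≤ 1) : 1 / (6 * exp 6) ^ 2 / t ≤ varrhoDerivIntegrand a t := by
  have ht : 0 < t := ha.trans hat
  have h6t : sinh (6 * t) ≤ 6 * exp 6 * t := by
    calc sinh (6 * t) ≤ 6 * t * exp (6 * t) := sinh_le_mul_exp _
      _ ≤ 6 * t * exp 6 := by gcongr; linarith
      _ = 6 * exp 6 * t := by ring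
  have h2t : 0 < sinh (2 * t) := sinh_pos_iff.2 (by linarith)
  have h2t_le : sinh (2 * t) ≤ sinh (6 * t) := sinh_le_sinh.2 (by linarith)
  have hu : 0 < sinh (4 * a + 2 * t) := sinh_pos_iff.2 (by linarith)
  have hu_le : sinh (4 * a + 2 * t) ≤ sinh (6 * t) := sinh_le_sinh.2 (by linarith)
  have hsqrt : √(sinh (2 * t) * sinh (4 * a + 2 * t) ^ 3) ≤ (6 * exp 6 * t) ^ 2 := by
    rw [← sqrt_sq (by positivity : (0 : ℝ) ≤ (6 * exp 6 * t) ^ 2)]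
    gcongr
    calc sinh (2 * t) * sinh (4 * a + 2 * t) ^ 3 ≤ sinh (6 * t) * sinh (6 * t) ^ 3 := by gcongr
      _ ≤ (6 * exp 6 * t) * (6 * exp 6 * t) ^ 3 := by gcongr
      _ = ((6 * exp 6 * t) ^ 2) ^ 2 := by ring
  calc 1 / (6 * exp 6) ^ 2 / t = t / (6 * exp 6 * t) ^ 2 := by field_simp
    _ ≤ t / √(sinh (2 * t) * sinh (4 * a + 2 * t) ^ 3) :=
        div_le_div_of_nonneg_left ht.le (sqrt_pos.2 (by positivity)) hsqrt
    _ ≤ sinh (a + t) / √(sinh (2 * t) * sinh (4 * a + 2 * t) ^ 3) := by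
        gcongr
        linarith [self_le_sinh_iff.2 (by linarith : 0 ≤ a + t)]
    _ ≤ varrhoDerivIntegrand a t := sinh_div_le_varrhoDerivIntegrand ha.le h2a (by linarith)

lemma integrableOn_varrhoDerivIntegrand (ha : 0 < a) (h2a : exp (2 * a) ≤ 2) :
    IntegrableOn (varrhoDerivIntegrand a) (Ioi 0) := by
  have hmeas : Measurable (varrhoDerivIntegrand a) := by
    unfold varrhoDerivIntegrand; fun_prop
  refine Integrable.mono' (integrableOn_inv_sqrt_mul_exp.const_mul (5 / √(sinh (4 * a))))
    hmeas.aestronglyMeasurable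
    (ae_restrict_of_forall_mem measurableSet_Ioi fun t ht => ?_)
  rw [norm_of_nonneg (varrhoDerivIntegrand_nonneg ha.le h2a (by linarith [mem_Ioi.1 ht]))]
  exact varrhoDerivIntegrand_le_inv_sqrt ha ht

end varrhoDerivIntegrand

lemma div_le_one_div_sinh_mul_cosh_sq {t : ℝ} (ht : 0 < t) (ht1 : t ≤ 1) :
    1 / (exp 1 * cosh 1 ^ 2) / t ≤ 1 / (sinh t * cosh t ^ 2) := by
  have hsinh : sinh t ≤ t * exp 1 :=
    (sinh_le_mul_exp t).trans (by gcongr)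
  have hcosh : cosh t ≤ cosh 1 := cosh_le_cosh.2 (by rw [abs_of_pos ht, abs_one]; exact ht1)
  rw [div_div]
  refine one_div_le_one_div_of_le (by have := sinh_pos_iff.2 ht; positivity) ?_
  calc sinh t * cosh t ^ 2 ≤ t * exp 1 * cosh 1 ^ 2 := by gcongr
    _ = exp 1 * cosh 1 ^ 2 * t := by ring

theorem varrho_deriv_tendsto_atTop :
    Tendsto (fun a : ℝ => ∫ t in Set.Ioi (0:ℝ),
        Real.sinh (a+t) * (5 * Real.cosh (a+t)^2 - Real.cosh (3*a+t)^2) /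
          (Real.cosh (a+t)^2 * Real.sqrt (Real.sinh (2*t) * Real.sinh (4*a+2*t)^3)))
      (nhdsWithin 0 (Set.Ioi 0)) atTop ∧
    ∫⁻ t in Set.Ioi (0:ℝ),
      ENNReal.ofReal (1 / (Real.sinh t * Real.cosh t ^ 2)) = ⊤ := by
  refine ⟨tendsto_setIntegral_Ioi_atTop_of_div_le (f := varrhoDerivIntegrand)
      (c := 1 / (6 * exp 6) ^ 2) (by positivity) ?_,
    lintegral_Ioi_ofReal_eq_top_of_div_le (c := 1 / (exp 1 * cosh 1 ^ 2)) (by positivity)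
      fun t ht => div_le_one_div_sinh_mul_cosh_sq ht.1 ht.2.le⟩
  filter_upwards [Ioo_mem_nhdsGT (half_pos (log_pos one_lt_two))] with a ⟨ha, ha_lt⟩
  have h2a : exp (2 * a) ≤ 2 := by
    simpa [exp_log] using exp_le_exp.2 (by linarith : 2 * a ≤ log 2)
  refine ⟨integrableOn_varrhoDerivIntegrand ha h2a,
    fun t ht => varrhoDerivIntegrand_nonneg ha.le h2a (by linarith [mem_Ioi.1 ht]),
    fun t ht => div_le_varrhoDerivIntegrand ha h2a ht.1 ht.2.le⟩
end

section
/- For a > 0 and s ≥ 0, the function y(a,s) := a + ∫₀^s cosh(2a)sinh(2t)/√(cosh²(2a)cosh²(2t) − 1) dt equals (1/2)·arcosh(cosh(2a)·cosh(2s)). -/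
open Real MeasureTheory

lemma arcosh_hasDerivAt {x : ℝ} (hx : 1 < x) :
    HasDerivAt _root_.arcosh (1 / Real.sqrt (x^2 - 1)) x := by
  have h1 : (0:ℝ) < x^2 - 1 := by nlinarith
  have hsqrt : 0 < Real.sqrt (x^2 - 1) := Real.sqrt_pos.mpr h1
  have hpoly : HasDerivAt (fun y : ℝ => y^2 - 1) (2*x) x := by
    simpa using ((hasDerivAt_pow 2 x).sub_const 1)
  have hsq : HasDerivAt (fun y : ℝ => Real.sqrt (y^2 - 1))
      (x / Real.sqrt (x^2 - 1)) x := by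
    have := (Real.hasDerivAt_sqrt (ne_of_gt h1)).comp x hpoly
    refine this.congr_deriv ?_
    field_simp
  have hinner : HasDerivAt (fun y : ℝ => y + Real.sqrt (y^2 - 1))
      (1 + x / Real.sqrt (x^2 - 1)) x := (hasDerivAt_id x).add hsq
  have hpos : 0 < x + Real.sqrt (x^2 - 1) := by linarith
  have := hinner.log (ne_of_gt hpos)
  refine this.congr_deriv ?_
  have hss : Real.sqrt (x^2 - 1) ^ 2 = x^2 - 1 := Real.sq_sqrt h1.le
  field_simp
  nlinarith [hss]

theorem y_eq (a s : ℝ) (ha : 0 < a) (hs : 0 ≤ s) :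
    a + ∫ t in (0:ℝ)..s,
        Real.cosh (2*a) * Real.sinh (2*t) /
          Real.sqrt (Real.cosh (2*a)^2 * Real.cosh (2*t)^2 - 1)
      = (1/2) * _root_.arcosh (Real.cosh (2*a) * Real.cosh (2*s)) := by
  set c := Real.cosh (2*a) with hc
  have hc1 : 1 < c := by
    exact Real.one_lt_cosh.mpr (by positivity)
  have hu1 : ∀ t : ℝ, 1 < c * Real.cosh (2*t) := by
    intro t
    nlinarith [Real.one_le_cosh (2*t)]
  have hupos : ∀ t : ℝ, 0 < c^2 * Real.cosh (2*t)^2 - 1 := by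
    intro t
    nlinarith [hu1 t]
  -- derivative
  have hderiv : ∀ t ∈ Set.uIcc (0:ℝ) s,
      HasDerivAt (fun t => (1/2) * _root_.arcosh (c * Real.cosh (2*t)))
        (c * Real.sinh (2*t) / Real.sqrt (c^2 * Real.cosh (2*t)^2 - 1)) t := by
    intro t _
    have hcosh : HasDerivAt (fun t : ℝ => c * Real.cosh (2*t))
        (c * (Real.sinh (2*t) * 2)) t := by
      simpa using (((Real.hasDerivAt_cosh (2*t)).comp t
        ((hasDerivAt_id t).const_mul 2)).const_mul c)
    have harc := (arcosh_hasDerivAt (hu1 t)).comp t hcosh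
    have := harc.const_mul (1/2 : ℝ)
    refine this.congr_deriv ?_
    have hsq : (c * Real.cosh (2*t))^2 - 1 = c^2 * Real.cosh (2*t)^2 - 1 := by ring
    rw [hsq]
    have hspos : 0 < Real.sqrt (c^2 * Real.cosh (2*t)^2 - 1) :=
      Real.sqrt_pos.mpr (hupos t)
    field_simp
  -- integrability: integrand is continuous
  have hcont : Continuous (fun t : ℝ => c * Real.sinh (2*t) /
      Real.sqrt (c^2 * Real.cosh (2*t)^2 - 1)) := by
    apply Continuous.div
    · exact continuous_const.mul (Real.continuous_sinh.comp (continuous_const.mul continuous_id))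
    · exact Real.continuous_sqrt.comp (by continuity)
    · intro t
      exact ne_of_gt (Real.sqrt_pos.mpr (hupos t))
  have hint := intervalIntegral.integral_eq_sub_of_hasDerivAt hderiv
    (hcont.intervalIntegrable 0 s)
  rw [hint]
  have hF0 : (1/2) * _root_.arcosh (c * Real.cosh (2*0)) = a := by
    simp only [mul_zero, Real.cosh_zero, mul_one]
    rw [_root_.arcosh]
    have h1 : c^2 - 1 = Real.sinh (2*a)^2 := by
      have := Real.cosh_sq_sub_sinh_sq (2*a)
      nlinarith [this]
    rw [hc, h1, Real.sqrt_sq (Real.sinh_nonneg_iff.mpr (by linarith)),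
      Real.cosh_add_sinh, Real.log_exp]
    ring
  rw [hF0]
  ring
end
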